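/- Let V_1, V_2, V_3, V_4 be 2-dimensional subspaces of E = F_2^4 that are pairwise trivially intersecting, so E = V_1 ⊕ V_2, and for j = 3,4 let α_j : V_1 → V_2 be the unique linear map with V_j = {x + α_j(x) : x ∈ V_1}. If V_1,...,V_4 extend to a 2-spread V_1,...,V_5, then α_3 + α_4 is an isomorphism and V_5 = {x + (α_3+α_4)(x) : x ∈ V_1}. -/

import Mathlib

open Matrix

variable {F : Type*} [Field F]

/-- Column space of a matrix: the span of its columns. -/
def colSpace {n m : ℕ} (M : Matrix (Fin n) (Fin m) F) : Submodule F (Fin n → F) :=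
  Submodule.span F (Set.range Mᵀ)

lemma colSpace_le_iff {n m : ℕ} (M : Matrix (Fin n) (Fin m) F) (U : Submodule F (Fin n → F)) :
    colSpace M ≤ U ↔ ∀ j, Mᵀ j ∈ U := by
  rw [colSpace, Submodule.span_le]
  exact ⟨fun h j => h ⟨j, rfl⟩, fun h => by rintro _ ⟨j, rfl⟩; exact h j⟩

/-- `C(U)`: the codewords of `C` whose column space is contained in `U`. -/
def codeCU {n m : ℕ} (C : Submodule F (Matrix (Fin n) (Fin m) F))
    (U : Submodule F (Fin n → F)) : Submodule F (Matrix (Fin n) (Fin m) F) where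
  carrier := {M | M ∈ C ∧ colSpace M ≤ U}
  add_mem' := by
    rintro a b ⟨haC, ha⟩ ⟨hbC, hb⟩
    refine ⟨C.add_mem haC hbC, (colSpace_le_iff _ _).2 fun j => ?_⟩
    have h := U.add_mem ((colSpace_le_iff a U).1 ha j) ((colSpace_le_iff b U).1 hb j)
    rw [Matrix.transpose_add]; convert h using 1
    funext k; simp
  zero_mem' := by
    exact ⟨C.zero_mem, (colSpace_le_iff _ _).2 fun j => U.zero_mem⟩
  smul_mem' := by
    rintro c a ⟨haC, ha⟩
    refine ⟨C.smul_mem c haC, (colSpace_le_iff _ _).2 fun j => ?_⟩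
    have h := U.smul_mem c ((colSpace_le_iff a U).1 ha j)
    rw [Matrix.transpose_smul]; convert h using 1
    funext k; simp

/-- Orthogonal complement with respect to the standard (dot-product) bilinear form. -/
def perp {n : ℕ} (U : Submodule F (Fin n → F)) : Submodule F (Fin n → F) where
  carrier := {v | ∀ u ∈ U, v ⬝ᵥ u = 0}
  add_mem' := by
    intro a b ha hb u hu
    rw [add_dotProduct, ha u hu, hb u hu, add_zero]
  zero_mem' := by
    intro u hu
    rw [zero_dotProduct]
  smul_mem' := by
    intro c a ha u hu
    rw [smul_dotProduct, ha u hu, smul_zero]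

/-- The minimum rank distance of a matrix code. -/
noncomputable def minRankDist {n m : ℕ} (C : Submodule F (Matrix (Fin n) (Fin m) F)) : ℕ :=
  sInf {r : ℕ | ∃ M ∈ C, M ≠ 0 ∧ M.rank = r}

/-- The rank function of the q-polymatroid associated to a matrix rank-metric code. -/
noncomputable def rhoCode {n m : ℕ} (C : Submodule F (Matrix (Fin n) (Fin m) F))
    (U : Submodule F (Fin n → F)) : ℚ :=
  ((Module.finrank F C : ℚ) - (Module.finrank F (codeCU C (perp U)) : ℚ)) / (m : ℚ)

/-! Given `E = V₁ ⊕ V₂`, the graph `{x + α x}` of a map `α : V₁ → V₂` meets `V₁` trivially iff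
`α` is injective (`V₁` is the graph of `0`), and two graphs meet trivially iff the difference of
their maps is injective. Over `𝔽₂` differences are sums, so the graph of `α₃ + α₄` meets `V₁` and
`V₂` trivially because `V₃ ⊓ V₄ = 0`, `V₃` because `α₄` is injective and `V₄` because `α₃` is.
Every nonzero vector lies on a line of the spread, so this graph lies in `V₅`, and equals it by
dimension. -/

namespace LinearMap

variable {R M : Type*} [Ring R] [AddCommGroup M] [Module R M] {U U' : Submodule R M}

def graphMap (f : U →ₗ[R] U') : U →ₗ[R] M :=
  U.subtype + U'.subtype ∘ₗ f

/-- Unlike `LinearMap.graph`, which lives in `U × U'`, this graph lives in `M` itself. -/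
def graphIn (f : U →ₗ[R] U') : Submodule R M :=
  range f.graphMap

theorem graphMap_apply (f : U →ₗ[R] U') (x : U) : f.graphMap x = (x : M) + f x :=
  rfl

theorem coe_graphIn (f : U →ₗ[R] U') :
    (f.graphIn : Set M) = {y | ∃ x : U, y = (x : M) + f x} := by
  ext y
  simp only [graphIn, SetLike.mem_coe, mem_range, graphMap_apply, Set.mem_ofPred_eq, eq_comm]

theorem graphIn_zero : (0 : U →ₗ[R] U').graphIn = U := by
  ext y
  simp [graphIn, graphMap_apply]

theorem graphMap_injective (h : Disjoint U U') (f : U →ₗ[R] U') :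
    Function.Injective f.graphMap := by
  refine (injective_iff_map_eq_zero _).2 fun x hx => ?_
  have hx' : (x : M) = -(f x : M) := eq_neg_of_add_eq_zero_left hx
  exact Subtype.ext (Submodule.disjoint_def.1 h x x.2 (hx' ▸ U'.neg_mem (f x).2))

theorem add_apply_mem_graphIn_iff (h : Disjoint U U') (f g : U →ₗ[R] U') (x : U) :
    (x : M) + f x ∈ g.graphIn ↔ f x = g x := by
  refine ⟨fun ⟨x', hx'⟩ => ?_, fun hfg => ⟨x, by rw [graphMap_apply, hfg]⟩⟩
  rw [graphMap_apply] at hx'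
  -- `x - x' = g x' - f x` lies in `U ⊓ U' = ⊥`
  have hdiff : (x : M) - x' = (g x' : M) - f x := by
    rw [sub_eq_sub_iff_add_eq_add, ← hx', add_comm]
  have hxx' : x' = x := (Subtype.ext <| sub_eq_zero.1 <| Submodule.disjoint_def.1 h _
    (U.sub_mem x.2 x'.2) (hdiff ▸ U'.sub_mem (g x').2 (f x).2)).symm
  subst hxx'
  exact Subtype.ext (add_left_cancel hx').symm

theorem disjoint_graphIn_iff (h : Disjoint U U') (f g : U →ₗ[R] U') :
    Disjoint f.graphIn g.graphIn ↔ Function.Injective (f - g) := by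
  rw [Submodule.disjoint_def, injective_iff_map_eq_zero]
  constructor
  · intro hfg x hx
    have hx' : f x = g x := sub_eq_zero.1 hx
    refine graphMap_injective h f ?_
    rw [map_zero]
    exact hfg _ ⟨x, rfl⟩ ((add_apply_mem_graphIn_iff h f g x).2 hx')
  · rintro hfg _ ⟨x, rfl⟩ hx
    rw [graphMap_apply, add_apply_mem_graphIn_iff h] at hx
    rw [hfg x (sub_eq_zero.2 hx), map_zero]

theorem disjoint_graphIn_left_iff (h : Disjoint U U') (f : U →ₗ[R] U') :
    Disjoint f.graphIn U ↔ Function.Injective f := by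
  simpa only [graphIn_zero, sub_zero] using disjoint_graphIn_iff h f 0

theorem disjoint_graphIn_right (h : Disjoint U U') (f : U →ₗ[R] U') : Disjoint f.graphIn U' := by
  rw [Submodule.disjoint_def]
  rintro _ ⟨x, rfl⟩ hx
  have hxU' : (x : M) ∈ U' := by simpa [graphMap_apply] using U'.sub_mem hx (f x).2
  have hx0 : x = 0 := Subtype.ext (Submodule.disjoint_def.1 h x x.2 hxU')
  rw [hx0, map_zero]

theorem finrank_graphIn (h : Disjoint U U') (f : U →ₗ[R] U') :
    Module.finrank R f.graphIn = Module.finrank R U :=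
  finrank_range_of_inj (graphMap_injective h f)

end LinearMap

theorem Submodule.le_of_forall_disjoint_of_exists_mem {R M ι : Type*} [Ring R] [AddCommGroup M]
    [Module R M] (V : ι → Submodule R M) (hcover : ∀ v : M, v ≠ 0 → ∃ i, v ∈ V i) (k : ι)
    (W : Submodule R M) (hW : ∀ i ≠ k, Disjoint W (V i)) : W ≤ V k := by
  intro v hv
  by_cases hv0 : v = 0
  · exact hv0 ▸ (V k).zero_mem
  obtain ⟨i, hi⟩ := hcover v hv0
  by_cases hik : i = k
  · exact hik ▸ hi
  · exact absurd (Submodule.disjoint_def.1 (hW i hik) v hv hi) hv0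

open LinearMap

theorem spread_graph_sum_general
    (V : Fin 5 → Submodule (ZMod 2) (Fin 4 → ZMod 2))
    (hdim : ∀ i, Module.finrank (ZMod 2) (V i) = 2)
    (hdisj : ∀ i j, i ≠ j → V i ⊓ V j = ⊥)
    (hcover : ∀ v : Fin 4 → ZMod 2, v ≠ 0 → ∃ i, v ∈ V i)
    (α₃ α₄ : ↥(V 0) →ₗ[ZMod 2] ↥(V 1))
    (h3 : (V 2 : Set (Fin 4 → ZMod 2)) =
      {y | ∃ x : ↥(V 0), y = (x : Fin 4 → ZMod 2) + ((α₃ x : ↥(V 1)) : Fin 4 → ZMod 2)})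
    (h4 : (V 3 : Set (Fin 4 → ZMod 2)) =
      {y | ∃ x : ↥(V 0), y = (x : Fin 4 → ZMod 2) + ((α₄ x : ↥(V 1)) : Fin 4 → ZMod 2)}) :
    Function.Bijective ⇑(α₃ + α₄) ∧
    (V 4 : Set (Fin 4 → ZMod 2)) =
      {y | ∃ x : ↥(V 0), y = (x : Fin 4 → ZMod 2) + (((α₃ + α₄) x : ↥(V 1)) : Fin 4 → ZMod 2)} := by
  have hd (i j : Fin 5) (hij : i ≠ j) : Disjoint (V i) (V j) := disjoint_iff.2 (hdisj i j hij)
  have h01 := hd 0 1 (by decide)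
  have hV2 : V 2 = α₃.graphIn := SetLike.coe_injective (h3.trans (coe_graphIn α₃).symm)
  have hV3 : V 3 = α₄.graphIn := SetLike.coe_injective (h4.trans (coe_graphIn α₄).symm)
  have hα₃ : Function.Injective α₃ :=
    (disjoint_graphIn_left_iff h01 α₃).1 (hV2 ▸ hd 2 0 (by decide))
  have hα₄ : Function.Injective α₄ :=
    (disjoint_graphIn_left_iff h01 α₄).1 (hV3 ▸ hd 3 0 (by decide))
  have hsum : Function.Injective (α₃ + α₄) := by
    rw [← ZModModule.sub_eq_add, ← disjoint_graphIn_iff h01, ← hV2, ← hV3]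
    exact hd 2 3 (by decide)
  have hle : (α₃ + α₄).graphIn ≤ V 4 := by
    refine Submodule.le_of_forall_disjoint_of_exists_mem V hcover 4 _ fun i hi => ?_
    fin_cases i
    · exact (disjoint_graphIn_left_iff h01 _).2 hsum
    · exact disjoint_graphIn_right h01 _
    · change Disjoint _ (V 2)
      rw [hV2, disjoint_graphIn_iff h01, add_sub_cancel_left α₃ α₄]; exact hα₄
    · change Disjoint _ (V 3)
      rw [hV3, disjoint_graphIn_iff h01, add_sub_cancel_right α₃ α₄]; exact hα₃
    · exact absurd rfl hi
  have hV4 : (α₃ + α₄).graphIn = V 4 :=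
    Submodule.eq_of_le_of_finrank_le hle (by rw [finrank_graphIn h01, hdim, hdim])
  refine ⟨⟨hsum, ?_⟩, by rw [← hV4, coe_graphIn]⟩
  exact (injective_iff_surjective_of_finrank_eq_finrank (by rw [hdim, hdim])).1 hsum

/-- in a 2-spread `V_1,...,V_5` of `F_2^4`, if `V_3, V_4` are the graphs of
linear maps `α_3, α_4 : V_1 → V_2`, then `α_3 + α_4` is an isomorphism and `V_5` is its
graph. -/
theorem spread_graph_sum
    (V : Fin 5 → Submodule (ZMod 2) (Fin 4 → ZMod 2))
    (hdim : ∀ i, Module.finrank (ZMod 2) (V i) = 2)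
    (hdisj : ∀ i j, i ≠ j → V i ⊓ V j = ⊥)
    (hcover : ∀ v : Fin 4 → ZMod 2, v ≠ 0 → ∃ i, v ∈ V i)
    (hcompl : V 0 ⊔ V 1 = ⊤)
    (α₃ α₄ : ↥(V 0) →ₗ[ZMod 2] ↥(V 1))
    (h3 : (V 2 : Set (Fin 4 → ZMod 2)) =
      {y | ∃ x : ↥(V 0), y = (x : Fin 4 → ZMod 2) + ((α₃ x : ↥(V 1)) : Fin 4 → ZMod 2)})
    (h4 : (V 3 : Set (Fin 4 → ZMod 2)) =
      {y | ∃ x : ↥(V 0), y = (x : Fin 4 → ZMod 2) + ((α₄ x : ↥(V 1)) : Fin 4 → ZMod 2)}) :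
    Function.Bijective ⇑(α₃ + α₄) ∧
    (V 4 : Set (Fin 4 → ZMod 2)) =
      {y | ∃ x : ↥(V 0), y = (x : Fin 4 → ZMod 2) + (((α₃ + α₄) x : ↥(V 1)) : Fin 4 → ZMod 2)} :=
  spread_graph_sum_general V hdim hdisj hcover α₃ α₄ h3 h4
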